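/- arXiv:2512.04006 — 3 statements merged into one kernel-verified Lean document; each statement's English description precedes it below -/
import Mathlib

section
/- Let K = 2^m for a natural number m ≥ 1, let Φ be the K×K Sylvester Hadamard matrix, let X = Φ[2:K, 2:K] be the submatrix obtained by deleting the first row and first column of Φ, and let Ψ = 1_{K−1} 1_{K−1}ᵀ − X ∈ ℝ^{(K−1)×(K−1)}. Then: (i) every entry of Ψ lies in {0, 2}; (ii) Ψ·1_{K−1} = K·1_{K−1}; (iii) Ψ² = K·I_{K−1} + K·1_{K−1} 1_{K−1}ᵀ; (iv) every column ψ_u of Ψ has Euclidean norm ‖ψ_u‖₂ = √(2K); and (v) Ψ is invertible with Ψ⁻¹·1_{K−1} = (1/K)·1_{K−1}. -/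
/-!
Write `K = 2^m`, `J = 1 1ᵀ` and `Φ = Φ_K`. By the block recursion `Φ` is symmetric with `Φ² = K I`,
and its first row and column consist of ones. Reading `Φ² = K I` at the entries with one index
equal to the first gives row (and column) sums `-1` for `X`; at the remaining entries it gives
`X² = K I - J`. Hence `Ψ J = K J` and `Ψ X = J X - X² = -K I`, so `Ψ² = Ψ J - Ψ X = K (I + J)`
and `Ψ⁻¹ = -X / K`. The entries of `Ψ` are `1 ∓ 1 ∈ {0, 2}`, so `ψ² = 2ψ` entrywise and the
squared norm of a column is twice its sum, `2K`.
-/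

open Matrix Finset

noncomputable section

/-- The Sylvester Hadamard matrix `Φ_{2^m}`, defined recursively by `Φ₁ = (1)` and
`Φ_{2^{m+1}} = [[Φ_{2^m}, Φ_{2^m}], [Φ_{2^m}, -Φ_{2^m}]]`. -/
def sylvester : (m : ℕ) → Matrix (Fin (2 ^ m)) (Fin (2 ^ m)) ℝ
  | 0 => Matrix.of fun _ _ => 1
  | m + 1 => Matrix.of fun i j =>
      (if 2 ^ m ≤ i.val ∧ 2 ^ m ≤ j.val then -1 else 1) *
        sylvester m ⟨i.val % 2 ^ m, Nat.mod_lt _ (Nat.two_pow_pos m)⟩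
          ⟨j.val % 2 ^ m, Nat.mod_lt _ (Nat.two_pow_pos m)⟩

/-- The core `X = Φ[2:K, 2:K]` obtained by deleting the first row and column of `Φ`. -/
def hadCore (m : ℕ) : Matrix (Fin (2 ^ m - 1)) (Fin (2 ^ m - 1)) ℝ :=
  Matrix.of fun i j =>
    sylvester m ⟨i.val + 1, by have h1 := Nat.two_pow_pos m; have h2 := i.isLt; omega⟩
      ⟨j.val + 1, by have h1 := Nat.two_pow_pos m; have h2 := j.isLt; omega⟩

/-- `Ψ = 1 1ᵀ − X`. -/
def PsiM (m : ℕ) : Matrix (Fin (2 ^ m - 1)) (Fin (2 ^ m - 1)) ℝ :=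
  Matrix.of fun i j => 1 - hadCore m i j

/-- `b_i(a) = Σ_j Ψ_{ij} exp(−(Ψa)_j)`. -/
def bVec (m : ℕ) (a : Fin (2 ^ m - 1) → ℝ) (i : Fin (2 ^ m - 1)) : ℝ :=
  ∑ j, PsiM m i j * Real.exp (-((PsiM m).mulVec a j))

/-- `D(a) = 1 + Σ_j exp(−(Ψa)_j)`. -/
def Dden (m : ℕ) (a : Fin (2 ^ m - 1) → ℝ) : ℝ :=
  1 + ∑ j, Real.exp (-((PsiM m).mulVec a j))

/-- The energy `E(a) = log(1 + Σ_j exp(−(Ψa)_j))`. -/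
def energyE (m : ℕ) (a : Fin (2 ^ m - 1) → ℝ) : ℝ :=
  Real.log (1 + ∑ j, Real.exp (-((PsiM m).mulVec a j)))

/-- `b̄(a) = Σ_j â_j b_j(a)` with `â = a / ‖a‖₁`. -/
def bbar (m : ℕ) (a : Fin (2 ^ m - 1) → ℝ) : ℝ :=
  ∑ j, (a j / ∑ k, a k) * bVec m a j

/-- `M(a) = (1/2) Σ_i (â_i − 1/(K−1))²`. -/
def Mmetric (m : ℕ) (a : Fin (2 ^ m - 1) → ℝ) : ℝ :=
  (1 / 2) * ∑ i, (a i / (∑ k, a k) - 1 / ((2 : ℝ) ^ m - 1)) ^ 2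

namespace Matrix

theorem fromBlocks_smul_one {l m α : Type*} [DecidableEq l] [DecidableEq m] [Semiring α] (c : α) :
    fromBlocks (c • (1 : Matrix l l α)) 0 0 (c • (1 : Matrix m m α)) = c • 1 := by
  rw [← fromBlocks_one, fromBlocks_smul, smul_zero, smul_zero]

theorem submatrix_smul_one_equiv {l m α : Type*} [DecidableEq l] [DecidableEq m] [Semiring α]
    (e : l ≃ m) (c : α) : (c • (1 : Matrix m m α)).submatrix e e = c • 1 := by
  ext i j
  simp [one_apply]

section CommRing

variable {R : Type*} [CommRing R] {n : ℕ}

theorem mul_apply_succ_succ (A B : Matrix (Fin (n + 1)) (Fin (n + 1)) R) (i j : Fin n) :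
    (A * B) i.succ j.succ =
      A i.succ 0 * B 0 j.succ +
        (A.submatrix Fin.succ Fin.succ * B.submatrix Fin.succ Fin.succ) i j := by
  simp only [mul_apply, Fin.sum_univ_succ, submatrix_apply]

theorem submatrix_succ_mulVec_one {H : Matrix (Fin (n + 1)) (Fin (n + 1)) R} (hsymm : Hᵀ = H)
    (hsq : H * H = (n + 1 : R) • 1) (hrow : ∀ j, H 0 j = 1) :
    H.submatrix Fin.succ Fin.succ *ᵥ (fun _ => 1) = fun _ => -1 := by
  funext i
  have hcol (k : Fin (n + 1)) : H k 0 = 1 := (congr_fun₂ hsymm k 0).symm.trans (hrow k)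
  have h := congr_fun₂ hsq i.succ 0
  simp only [mul_apply, Fin.sum_univ_succ, hcol, smul_apply, one_apply_ne (Fin.succ_ne_zero i),
    smul_zero, mul_one] at h
  simp only [mulVec, dotProduct, submatrix_apply, mul_one]
  linear_combination h

theorem submatrix_succ_mul_self {H : Matrix (Fin (n + 1)) (Fin (n + 1)) R} (hsymm : Hᵀ = H)
    (hsq : H * H = (n + 1 : R) • 1) (hrow : ∀ j, H 0 j = 1) :
    H.submatrix Fin.succ Fin.succ * H.submatrix Fin.succ Fin.succ =
      (n + 1 : R) • 1 - of fun _ _ => 1 := by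
  ext i j
  have hcol (k : Fin (n + 1)) : H k 0 = 1 := (congr_fun₂ hsymm k 0).symm.trans (hrow k)
  have h := congr_fun₂ hsq i.succ j.succ
  rw [mul_apply_succ_succ, hcol, hrow] at h
  simp only [smul_apply, one_apply, Fin.succ_inj, sub_apply, of_apply] at h ⊢
  linear_combination h

variable {X : Matrix (Fin n) (Fin n) R}

theorem allOnes_sub_mulVec_one (hX1 : X *ᵥ (fun _ => 1) = fun _ => -1) :
    (of (fun _ _ => 1) - X) *ᵥ (fun _ => 1) = fun _ => (n + 1 : R) := by
  rw [sub_mulVec, hX1]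
  funext i
  simp [mulVec, dotProduct]

theorem allOnes_sub_mul_allOnes (hX1 : X *ᵥ (fun _ => 1) = fun _ => -1) :
    (of (fun _ _ => 1) - X) * of (fun _ _ => 1) = (n + 1 : R) • of fun _ _ => 1 := by
  ext i j
  simpa [mul_apply, mulVec, dotProduct] using congr_fun (allOnes_sub_mulVec_one hX1) i

theorem allOnes_sub_mul_eq_neg_smul_one (hX : Xᵀ = X) (hX1 : X *ᵥ (fun _ => 1) = fun _ => -1)
    (hX2 : X * X = (n + 1 : R) • 1 - of fun _ _ => 1) :
    (of (fun _ _ => 1) - X) * X = -(n + 1 : R) • 1 := by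
  have hJX : of (fun _ _ => 1) * X = -of fun _ _ => 1 := by
    ext i j
    have hrow := congr_fun hX1 j
    simp only [mulVec, dotProduct, mul_one] at hrow
    simp only [mul_apply, of_apply, one_mul, neg_apply, ← hrow]
    exact Finset.sum_congr rfl fun k _ => congr_fun₂ hX j k
  rw [sub_mul, hJX, hX2]
  module

theorem allOnes_sub_mul_self (hX : Xᵀ = X) (hX1 : X *ᵥ (fun _ => 1) = fun _ => -1)
    (hX2 : X * X = (n + 1 : R) • 1 - of fun _ _ => 1) :
    (of (fun _ _ => 1) - X) * (of (fun _ _ => 1) - X) =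
      (n + 1 : R) • 1 + (n + 1 : R) • of fun _ _ => 1 := by
  rw [mul_sub, allOnes_sub_mul_allOnes hX1, allOnes_sub_mul_eq_neg_smul_one hX hX1 hX2]
  module

theorem allOnes_sub_apply_eq_zero_or_two {i j : Fin n} (h : X i j = 1 ∨ X i j = -1) :
    (of (fun _ _ => 1) - X : Matrix _ _ R) i j = 0 ∨
      (of (fun _ _ => 1) - X : Matrix _ _ R) i j = 2 := by
  rcases h with h | h <;> simp only [sub_apply, of_apply, h] <;> norm_num

theorem sum_allOnes_sub_apply_sq (hX : Xᵀ = X) (hX1 : X *ᵥ (fun _ => 1) = fun _ => -1)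
    (hpm : ∀ i j, X i j = 1 ∨ X i j = -1) (u : Fin n) :
    ∑ i, (of (fun _ _ => 1) - X : Matrix _ _ R) i u ^ 2 = 2 * (n + 1 : R) := by
  have hsq (i : Fin n) : (of (fun _ _ => 1) - X : Matrix _ _ R) i u ^ 2 =
      2 * (of (fun _ _ => 1) - X : Matrix _ _ R) u i := by
    rw [sub_apply, sub_apply, ← congr_fun₂ hX i u]
    rcases hpm u i with h | h <;> simp only [transpose_apply, of_apply, h] <;> norm_num
  have hrow := congr_fun (allOnes_sub_mulVec_one hX1) u
  simp only [mulVec, dotProduct, mul_one] at hrow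
  rw [Finset.sum_congr rfl fun i _ => hsq i, ← Finset.mul_sum, hrow]

end CommRing

section Field

variable {K : Type*} [Field K] {n : ℕ} {X : Matrix (Fin n) (Fin n) K}

theorem allOnes_sub_mul_neg_inv_smul (hX : Xᵀ = X) (hX1 : X *ᵥ (fun _ => 1) = fun _ => -1)
    (hX2 : X * X = (n + 1 : K) • 1 - of fun _ _ => 1) (hn : (n + 1 : K) ≠ 0) :
    (of (fun _ _ => 1) - X) * (-(n + 1 : K)⁻¹ • X) = 1 := by
  rw [Matrix.mul_smul, allOnes_sub_mul_eq_neg_smul_one hX hX1 hX2, smul_smul, neg_mul_neg,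
    inv_mul_cancel₀ hn, one_smul]

theorem isUnit_allOnes_sub (hX : Xᵀ = X) (hX1 : X *ᵥ (fun _ => 1) = fun _ => -1)
    (hX2 : X * X = (n + 1 : K) • 1 - of fun _ _ => 1) (hn : (n + 1 : K) ≠ 0) :
    IsUnit (of (fun _ _ => 1) - X) :=
  (isUnit_iff_isUnit_det _).mpr
    (isUnit_det_of_right_inverse (allOnes_sub_mul_neg_inv_smul hX hX1 hX2 hn))

theorem inv_allOnes_sub (hX : Xᵀ = X) (hX1 : X *ᵥ (fun _ => 1) = fun _ => -1)
    (hX2 : X * X = (n + 1 : K) • 1 - of fun _ _ => 1) (hn : (n + 1 : K) ≠ 0) :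
    (of (fun _ _ => 1) - X)⁻¹ = -(n + 1 : K)⁻¹ • X :=
  inv_eq_right_inv (allOnes_sub_mul_neg_inv_smul hX hX1 hX2 hn)

theorem inv_allOnes_sub_mulVec_one (hX : Xᵀ = X) (hX1 : X *ᵥ (fun _ => 1) = fun _ => -1)
    (hX2 : X * X = (n + 1 : K) • 1 - of fun _ _ => 1) (hn : (n + 1 : K) ≠ 0) :
    (of (fun _ _ => 1) - X)⁻¹ *ᵥ (fun _ => 1) = fun _ => 1 / (n + 1 : K) := by
  rw [inv_allOnes_sub hX hX1 hX2 hn, smul_mulVec, hX1]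
  funext i
  simp

end Field

end Matrix

def sylvesterBlockEquiv (m : ℕ) : Fin (2 ^ m) ⊕ Fin (2 ^ m) ≃ Fin (2 ^ (m + 1)) :=
  finSumFinEquiv.trans (finCongr (Nat.two_pow_succ m).symm)

theorem sylvester_succ (m : ℕ) :
    sylvester (m + 1) = reindex (sylvesterBlockEquiv m) (sylvesterBlockEquiv m)
      (fromBlocks (sylvester m) (sylvester m) (sylvester m) (-sylvester m)) := by
  ext i j
  obtain ⟨x, rfl⟩ := (sylvesterBlockEquiv m).surjective i
  obtain ⟨y, rfl⟩ := (sylvesterBlockEquiv m).surjective j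
  rw [reindex_apply, submatrix_apply, Equiv.symm_apply_apply, Equiv.symm_apply_apply]
  rcases x with a | a <;> rcases y with b | b <;>
    simp [sylvester, sylvesterBlockEquiv, Nat.mod_eq_of_lt, a.isLt, b.isLt]

theorem sylvester_transpose (m : ℕ) : (sylvester m)ᵀ = sylvester m := by
  induction m with
  | zero => rfl
  | succ m ih => rw [sylvester_succ, transpose_reindex, fromBlocks_transpose, transpose_neg, ih]

theorem sylvester_mul_self (m : ℕ) : sylvester m * sylvester m = (2 ^ m : ℝ) • 1 := by
  induction m with
  | zero => ext i j; fin_cases i; fin_cases j; simp [sylvester, mul_apply]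
  | succ m ih =>
    rw [sylvester_succ, reindex_apply, submatrix_mul_equiv, fromBlocks_multiply]
    simp only [ih, neg_mul, mul_neg, neg_neg, add_neg_cancel]
    rw [← two_smul ℝ, smul_smul, ← pow_succ', fromBlocks_smul_one, submatrix_smul_one_equiv]

theorem sylvester_zero_left (m : ℕ) (j : Fin (2 ^ m)) : sylvester m 0 j = 1 := by
  induction m with
  | zero => rfl
  | succ m ih => simp [sylvester, ih]

theorem sylvester_eq_one_or_neg_one (m : ℕ) (i j : Fin (2 ^ m)) :
    sylvester m i j = 1 ∨ sylvester m i j = -1 := by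
  induction m with
  | zero => exact .inl rfl
  | succ m ih =>
    simp only [sylvester, of_apply]
    rcases ih ⟨i.val % 2 ^ m, Nat.mod_lt _ (Nat.two_pow_pos m)⟩
      ⟨j.val % 2 ^ m, Nat.mod_lt _ (Nat.two_pow_pos m)⟩ with h | h <;>
      rw [h] <;> split_ifs <;> simp

theorem cast_two_pow_sub_one_add_one (m : ℕ) : ((2 ^ m - 1 : ℕ) + 1 : ℝ) = 2 ^ m := by
  rw [Nat.cast_sub Nat.one_le_two_pow]
  push_cast
  ring

/-- `Φ_{2^m}` indexed by `Fin (2^m - 1 + 1)`, so that deleting its first row and column is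
`submatrix Fin.succ Fin.succ`. -/
def sylvesterReindexed (m : ℕ) : Matrix (Fin (2 ^ m - 1 + 1)) (Fin (2 ^ m - 1 + 1)) ℝ :=
  reindex (finCongr (Nat.sub_add_cancel Nat.one_le_two_pow).symm)
    (finCongr (Nat.sub_add_cancel Nat.one_le_two_pow).symm) (sylvester m)

theorem sylvesterReindexed_transpose (m : ℕ) :
    (sylvesterReindexed m)ᵀ = sylvesterReindexed m := by
  rw [sylvesterReindexed, transpose_reindex, sylvester_transpose]

theorem sylvesterReindexed_mul_self (m : ℕ) :
    sylvesterReindexed m * sylvesterReindexed m = ((2 ^ m - 1 : ℕ) + 1 : ℝ) • 1 := by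
  rw [sylvesterReindexed, reindex_apply, submatrix_mul_equiv, sylvester_mul_self,
    submatrix_smul_one_equiv, cast_two_pow_sub_one_add_one]

theorem sylvesterReindexed_zero_left (m : ℕ) (j : Fin (2 ^ m - 1 + 1)) :
    sylvesterReindexed m 0 j = 1 :=
  sylvester_zero_left m _

theorem hadCore_eq_submatrix (m : ℕ) :
    hadCore m = (sylvesterReindexed m).submatrix Fin.succ Fin.succ :=
  rfl

theorem transpose_hadCore (m : ℕ) : (hadCore m)ᵀ = hadCore m := by
  rw [hadCore_eq_submatrix, transpose_submatrix, sylvesterReindexed_transpose]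

theorem hadCore_mulVec_one (m : ℕ) : hadCore m *ᵥ (fun _ => 1) = fun _ => -1 :=
  submatrix_succ_mulVec_one (sylvesterReindexed_transpose m) (sylvesterReindexed_mul_self m)
    (sylvesterReindexed_zero_left m)

theorem hadCore_mul_self (m : ℕ) :
    hadCore m * hadCore m = ((2 ^ m - 1 : ℕ) + 1 : ℝ) • 1 - of fun _ _ => 1 :=
  submatrix_succ_mul_self (sylvesterReindexed_transpose m) (sylvesterReindexed_mul_self m)
    (sylvesterReindexed_zero_left m)

theorem hadCore_eq_one_or_neg_one (m : ℕ) (i j : Fin (2 ^ m - 1)) :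
    hadCore m i j = 1 ∨ hadCore m i j = -1 :=
  sylvester_eq_one_or_neg_one m _ _

theorem PsiM_eq_allOnes_sub_hadCore (m : ℕ) : PsiM m = of (fun _ _ => 1) - hadCore m :=
  rfl

theorem Psi_basic_properties_general (m : ℕ) :
    (∀ i j, PsiM m i j = 0 ∨ PsiM m i j = 2) ∧
    ((PsiM m).mulVec (fun _ => 1) = fun _ => (2 : ℝ) ^ m) ∧
    (PsiM m * PsiM m =
      ((2 : ℝ) ^ m) • (1 : Matrix (Fin (2 ^ m - 1)) (Fin (2 ^ m - 1)) ℝ) +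
      ((2 : ℝ) ^ m) • Matrix.of (fun _ _ => (1 : ℝ))) ∧
    (∀ u, Real.sqrt (∑ i, (PsiM m i u) ^ 2) = Real.sqrt (2 * 2 ^ m)) ∧
    (IsUnit (PsiM m) ∧ (PsiM m)⁻¹.mulVec (fun _ => 1) = fun _ => 1 / ((2 : ℝ) ^ m)) := by
  have hX := transpose_hadCore m
  have hX1 := hadCore_mulVec_one m
  have hX2 := hadCore_mul_self m
  have hpm := hadCore_eq_one_or_neg_one m
  have hK : ((2 ^ m - 1 : ℕ) + 1 : ℝ) ≠ 0 := Nat.cast_add_one_ne_zero _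
  rw [PsiM_eq_allOnes_sub_hadCore, ← cast_two_pow_sub_one_add_one]
  exact ⟨fun i j => allOnes_sub_apply_eq_zero_or_two (hpm i j),
    allOnes_sub_mulVec_one hX1,
    allOnes_sub_mul_self hX hX1 hX2,
    fun u => by rw [sum_allOnes_sub_apply_sq hX hX1 hpm u],
    isUnit_allOnes_sub hX hX1 hX2 hK,
    inv_allOnes_sub_mulVec_one hX hX1 hX2 hK⟩

/-- properties of `Ψ = 1 1ᵀ − X`.
For `K = 2^m` with `m ≥ 1`: (i) every entry of `Ψ` lies in `{0, 2}`;
(ii) `Ψ·1 = K·1`; (iii) `Ψ² = K·I + K·1 1ᵀ`; (iv) every column of `Ψ` has Euclidean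
norm `√(2K)`; (v) `Ψ` is invertible with `Ψ⁻¹·1 = (1/K)·1`. -/
theorem Psi_basic_properties (m : ℕ) (hm : 1 ≤ m) :
    (∀ i j, PsiM m i j = 0 ∨ PsiM m i j = 2) ∧
    ((PsiM m).mulVec (fun _ => 1) = fun _ => (2 : ℝ) ^ m) ∧
    (PsiM m * PsiM m =
      ((2 : ℝ) ^ m) • (1 : Matrix (Fin (2 ^ m - 1)) (Fin (2 ^ m - 1)) ℝ) +
      ((2 : ℝ) ^ m) • Matrix.of (fun _ _ => (1 : ℝ))) ∧
    (∀ u, Real.sqrt (∑ i, (PsiM m i u) ^ 2) = Real.sqrt (2 * 2 ^ m)) ∧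
    (IsUnit (PsiM m) ∧ (PsiM m)⁻¹.mulVec (fun _ => 1) = fun _ => 1 / ((2 : ℝ) ^ m)) :=
  Psi_basic_properties_general m
end
end

section
/- Let K = 2^m for a natural number m ≥ 1. Then: (i) for every a ∈ ℝ^{K−1} and every i, b_i(a) ≥ 0; and (ii) if a : [0, ∞) → ℝ^{K−1} is a solution of the reduced cross-entropy gradient flow da_i/dt = a_i b_i(a)/D(a) with a_i(0) > 0 for all i, then for every i the function t ↦ a_i(t) is nondecreasing and satisfies a_i(t) > 0 for all t ≥ 0. -/
open Matrix Finset

noncomputable section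

lemma sylvester_eq (m : ℕ) : ∀ i j, sylvester m i j = 1 ∨ sylvester m i j = -1 := by
  induction m with
  | zero => intro i j; left; rfl
  | succ m ih =>
    intro i j
    simp only [sylvester, Matrix.of_apply]
    rcases ih ⟨i.val % 2 ^ m, Nat.mod_lt _ (Nat.two_pow_pos m)⟩
      ⟨j.val % 2 ^ m, Nat.mod_lt _ (Nat.two_pow_pos m)⟩ with h | h <;>
      rw [h] <;> by_cases hc : 2 ^ m ≤ i.val ∧ 2 ^ m ≤ j.val <;> simp [hc]

lemma psiM_nonneg (m : ℕ) (i j : Fin (2 ^ m - 1)) : 0 ≤ PsiM m i j := by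
  unfold PsiM hadCore
  rcases sylvester_eq m ⟨i.val + 1, by have h1 := Nat.two_pow_pos m; have h2 := i.isLt; omega⟩
    ⟨j.val + 1, by have h1 := Nat.two_pow_pos m; have h2 := j.isLt; omega⟩ with h | h <;>
    simp [Matrix.of_apply, h]

lemma bVec_nonneg' (m : ℕ) (a : Fin (2 ^ m - 1) → ℝ) (i : Fin (2 ^ m - 1)) :
    0 ≤ bVec m a i :=
  Finset.sum_nonneg fun j _ => mul_nonneg (psiM_nonneg m i j) (Real.exp_pos _).le

lemma Dden_pos (m : ℕ) (a : Fin (2 ^ m - 1) → ℝ) : 0 < Dden m a := by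
  unfold Dden; positivity

/-- nonnegativity of `b` and monotone positive trajectories.
(i) `b_i(a) ≥ 0` for every `a` and `i`. (ii) If `a : [0,∞) → ℝ^{K−1}` solves the reduced
cross-entropy gradient flow `da_i/dt = a_i b_i(a)/D(a)` with `a_i(0) > 0` for all `i`,
then each `t ↦ a_i(t)` is nondecreasing on `[0,∞)` and `a_i(t) > 0` for all `t ≥ 0`. -/
theorem bVec_nonneg_and_flow_monotone_pos (m : ℕ) (hm : 1 ≤ m) :
    (∀ (a : Fin (2 ^ m - 1) → ℝ) (i : Fin (2 ^ m - 1)), 0 ≤ bVec m a i) ∧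
    (∀ a : ℝ → Fin (2 ^ m - 1) → ℝ,
      (∀ t ≥ (0 : ℝ), ∀ i, HasDerivAt (fun s => a s i)
          (a t i * bVec m (a t) i / Dden m (a t)) t) →
      (∀ i, 0 < a 0 i) →
      ∀ i, MonotoneOn (fun t => a t i) (Set.Ici (0 : ℝ)) ∧
        ∀ t ≥ (0 : ℝ), 0 < a t i) := by
  refine ⟨bVec_nonneg' m, ?_⟩
  intro a hderiv h0 i
  set f : ℝ → ℝ := fun t => a t i with hf
  set c : ℝ → ℝ := fun t => bVec m (a t) i / Dden m (a t) with hc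
  have hc_nonneg : ∀ t, 0 ≤ c t := fun t =>
    div_nonneg (bVec_nonneg' m _ _) (Dden_pos m _).le
  have hderiv' : ∀ t ≥ (0 : ℝ), HasDerivAt f (f t * c t) t := by
    intro t ht
    have h := hderiv t ht i
    simpa [hf, hc, mul_div_assoc] using h
  have hcont : ContinuousOn f (Set.Ici (0 : ℝ)) := fun t ht =>
    (hderiv' t ht).continuousAt.continuousWithinAt
  have hpos : ∀ t ≥ (0 : ℝ), 0 < f t := by
    by_contra h
    push_neg at h
    obtain ⟨t₁, ht₁, ht₁'⟩ := h
    set S : Set ℝ := {t | 0 ≤ t ∧ f t ≤ 0} with hS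
    have hSne : S.Nonempty := ⟨t₁, ht₁, ht₁'⟩
    have hSbdd : BddBelow S := ⟨0, fun x hx => hx.1⟩
    have hSclosed : IsClosed S := by
      have : S = Set.Ici (0 : ℝ) ∩ f ⁻¹' Set.Iic (0 : ℝ) := by
        ext x
        simp only [hS, Set.mem_setOf_eq, Set.mem_inter_iff, Set.mem_Ici,
          Set.mem_preimage, Set.mem_Iic]
      rw [this]
      exact hcont.preimage_isClosed_of_isClosed isClosed_Ici isClosed_Iic
    set t₀ := sInf S with ht₀
    have ht₀S : t₀ ∈ S := hSclosed.csInf_mem hSne hSbdd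
    have ht₀0 : 0 ≤ t₀ := ht₀S.1
    have ht₀pos : 0 < t₀ := by
      rcases ht₀0.lt_or_eq with h | h
      · exact h
      · exact absurd ht₀S.2 (by rw [← h]; exact not_le.mpr (h0 i))
    have hposlt : ∀ s, 0 ≤ s → s < t₀ → 0 < f s := by
      intro s hs hst
      by_contra hfs
      exact absurd (csInf_le hSbdd ⟨hs, le_of_not_gt hfs⟩) (not_le.mpr hst)
    have hmono : MonotoneOn f (Set.Icc 0 t₀) := by
      refine monotoneOn_of_deriv_nonneg (convex_Icc 0 t₀)
        (hcont.mono fun x hx => hx.1) (fun x hx => ?_) (fun x hx => ?_)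
      · rw [interior_Icc] at hx
        exact (hderiv' x hx.1.le).differentiableAt.differentiableWithinAt
      · rw [interior_Icc] at hx
        rw [(hderiv' x hx.1.le).deriv]
        exact mul_nonneg (hposlt x hx.1.le hx.2).le (hc_nonneg x)
    have : f 0 ≤ f t₀ :=
      hmono (Set.left_mem_Icc.mpr ht₀0) (Set.right_mem_Icc.mpr ht₀0) ht₀0
    exact absurd (this.trans ht₀S.2) (not_le.mpr (h0 i))
  refine ⟨?_, hpos⟩
  refine monotoneOn_of_deriv_nonneg (convex_Ici 0) hcont (fun x hx => ?_) (fun x hx => ?_)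
  · rw [interior_Ici] at hx
    exact (hderiv' x hx.le).differentiableAt.differentiableWithinAt
  · rw [interior_Ici] at hx
    rw [(hderiv' x hx.le).deriv]
    exact mul_nonneg (hpos x hx.le).le (hc_nonneg x)
end
end

section
/- Let K = 2^m for a natural number m ≥ 1. Let a* ∈ ℝ^{K−1}, and let a' ∈ ℝ^{2K−1} be the vector obtained by appending K zeros to a*, i.e., a' = [a*, 0_K]. Write b* and b̄* for b(a*) and Σ_j â*_j b_j(a*) computed with the (K−1)×(K−1) matrix Ψ_{K−1}, and b', b̄' for the analogous quantities computed for a' with the (2K−1)×(2K−1) matrix Ψ_{2K−1}. Then b'_i = 2·b*_i for all i = 1, …, K−1, and b̄' = 2·b̄*. -/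
open Matrix Finset

noncomputable section

/-! The block form of `Ψ_{2K−1}` shows that, on a vector supported on the first `K − 1`
coordinates, `Ψ_{2K−1} a' = (Ψ_{K−1} a*, 0, Ψ_{K−1} a*)`. Each row `i < K − 1` of `Ψ_{2K−1}`
reads `(Ψ_{K−1} row i, 0, Ψ_{K−1} row i)`, so `b'_i` is the sum of two copies of `b*_i`; and
since `a'` vanishes off the first block, `b̄'` only sees these rows. -/

lemma sylvester_symm (m : ℕ) (i j : Fin (2 ^ m)) : sylvester m i j = sylvester m j i := by
  induction m with
  | zero => rfl
  | succ m ih => simp only [sylvester, of_apply, ih, and_comm]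

lemma sylvester_apply_zero_right (m : ℕ) (i : Fin (2 ^ m)) :
    sylvester m i ⟨0, Nat.two_pow_pos m⟩ = 1 := by
  induction m with
  | zero => rfl
  | succ m ih =>
    simp only [sylvester, of_apply, Nat.zero_mod, ih, mul_one]
    exact if_neg (by have := Nat.two_pow_pos m; omega)

lemma sylvester_succ_apply_of_lt_left (m : ℕ) (i j : Fin (2 ^ (m + 1))) (hi : i.val < 2 ^ m) :
    sylvester (m + 1) i j =
      sylvester m ⟨i.val, hi⟩ ⟨j.val % 2 ^ m, Nat.mod_lt _ (Nat.two_pow_pos m)⟩ := by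
  simp only [sylvester, of_apply, Nat.mod_eq_of_lt hi]
  rw [if_neg (by omega), one_mul]

lemma PsiM_symm (m : ℕ) (i j : Fin (2 ^ m - 1)) : PsiM m i j = PsiM m j i := by
  simp only [PsiM, hadCore, of_apply, sylvester_symm m]

lemma two_pow_succ_sub_one (m : ℕ) : 2 ^ (m + 1) - 1 = (2 ^ m - 1) + 1 + (2 ^ m - 1) := by
  have := Nat.two_pow_pos m
  rw [pow_succ]
  omega

section Blocks

variable {m : ℕ}

/- The (0-based) index blocks `{0, …, K − 2}`, `{K − 1}`, `{K, …, 2K − 2}` of `Ψ_{2K−1}`. -/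

def lowIdx (i : Fin (2 ^ m - 1)) : Fin (2 ^ (m + 1) - 1) :=
  ⟨i.val, by have := two_pow_succ_sub_one m; omega⟩

def midIdx (m : ℕ) : Fin (2 ^ (m + 1) - 1) :=
  ⟨2 ^ m - 1, by have := two_pow_succ_sub_one m; have := Nat.two_pow_pos m; omega⟩

def highIdx (i : Fin (2 ^ m - 1)) : Fin (2 ^ (m + 1) - 1) :=
  ⟨2 ^ m + i.val, by have := two_pow_succ_sub_one m; omega⟩

lemma sum_fin_two_pow_succ_sub_one {M : Type*} [AddCommMonoid M] (f : Fin (2 ^ (m + 1) - 1) → M) :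
    ∑ j, f j = ∑ j, f (lowIdx j) + f (midIdx m) + ∑ j, f (highIdx j) := by
  rw [← (finCongr (two_pow_succ_sub_one m)).symm.sum_comp, Fin.sum_univ_add, Fin.sum_univ_add,
    Fin.sum_univ_one]
  have := Nat.two_pow_pos m
  congr 2
  funext j
  congr 1
  ext
  simp only [finCongr_symm, finCongr_apply_coe, Fin.val_natAdd, highIdx]
  omega

lemma PsiM_succ_lowIdx (i : Fin (2 ^ m - 1)) (c : Fin (2 ^ (m + 1) - 1)) :
    PsiM (m + 1) (lowIdx i) c = 1 - sylvester m ⟨i.val + 1, by omega⟩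
      ⟨(c.val + 1) % 2 ^ m, Nat.mod_lt _ (Nat.two_pow_pos m)⟩ := by
  simp only [PsiM, hadCore, of_apply]
  rw [sylvester_succ_apply_of_lt_left]
  rfl

lemma PsiM_succ_lowIdx_lowIdx (i j : Fin (2 ^ m - 1)) :
    PsiM (m + 1) (lowIdx i) (lowIdx j) = PsiM m i j := by
  rw [PsiM_succ_lowIdx]
  simp only [lowIdx, Nat.mod_eq_of_lt (show j.val + 1 < 2 ^ m by omega)]
  rfl

lemma PsiM_succ_lowIdx_midIdx (i : Fin (2 ^ m - 1)) : PsiM (m + 1) (lowIdx i) (midIdx m) = 0 := by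
  rw [PsiM_succ_lowIdx]
  simp only [midIdx, Nat.sub_add_cancel (Nat.two_pow_pos m), Nat.mod_self,
    sylvester_apply_zero_right, sub_self]

lemma PsiM_succ_lowIdx_highIdx (i j : Fin (2 ^ m - 1)) :
    PsiM (m + 1) (lowIdx i) (highIdx j) = PsiM m i j := by
  rw [PsiM_succ_lowIdx]
  simp only [highIdx, add_assoc, Nat.add_mod_left,
    Nat.mod_eq_of_lt (show j.val + 1 < 2 ^ m by omega)]
  rfl

def padZeros (a : Fin (2 ^ m - 1) → ℝ) : Fin (2 ^ (m + 1) - 1) → ℝ :=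
  fun j => if h : j.val < 2 ^ m - 1 then a ⟨j.val, h⟩ else 0

lemma padZeros_lowIdx (a : Fin (2 ^ m - 1) → ℝ) (i : Fin (2 ^ m - 1)) :
    padZeros a (lowIdx i) = a i :=
  dif_pos i.isLt

lemma padZeros_midIdx (a : Fin (2 ^ m - 1) → ℝ) : padZeros a (midIdx m) = 0 :=
  dif_neg (lt_irrefl _)

lemma padZeros_highIdx (a : Fin (2 ^ m - 1) → ℝ) (i : Fin (2 ^ m - 1)) :
    padZeros a (highIdx i) = 0 :=
  dif_neg (by simp only [highIdx]; omega)

lemma sum_padZeros_eq {M : Type*} [AddCommMonoid M] (a : Fin (2 ^ m - 1) → ℝ)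
    (F : Fin (2 ^ (m + 1) - 1) → ℝ → M) (hF : ∀ j, F j 0 = 0) :
    ∑ j, F j (padZeros a j) = ∑ j, F (lowIdx j) (a j) := by
  simp only [sum_fin_two_pow_succ_sub_one, padZeros_lowIdx, padZeros_midIdx, padZeros_highIdx, hF,
    sum_const_zero, add_zero]

lemma mulVec_padZeros (a : Fin (2 ^ m - 1) → ℝ) (r : Fin (2 ^ (m + 1) - 1)) :
    (PsiM (m + 1) *ᵥ padZeros a) r = ∑ k, PsiM (m + 1) r (lowIdx k) * a k :=
  sum_padZeros_eq a (fun k x => PsiM (m + 1) r k * x) fun _ => mul_zero _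

lemma mulVec_padZeros_lowIdx (a : Fin (2 ^ m - 1) → ℝ) (i : Fin (2 ^ m - 1)) :
    (PsiM (m + 1) *ᵥ padZeros a) (lowIdx i) = (PsiM m *ᵥ a) i := by
  rw [mulVec_padZeros]
  simp only [PsiM_succ_lowIdx_lowIdx, mulVec, dotProduct]

lemma mulVec_padZeros_midIdx (a : Fin (2 ^ m - 1) → ℝ) :
    (PsiM (m + 1) *ᵥ padZeros a) (midIdx m) = 0 := by
  rw [mulVec_padZeros]
  simp only [PsiM_symm (m + 1) (midIdx m), PsiM_succ_lowIdx_midIdx, zero_mul, sum_const_zero]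

lemma mulVec_padZeros_highIdx (a : Fin (2 ^ m - 1) → ℝ) (i : Fin (2 ^ m - 1)) :
    (PsiM (m + 1) *ᵥ padZeros a) (highIdx i) = (PsiM m *ᵥ a) i := by
  rw [mulVec_padZeros]
  simp only [PsiM_symm (m + 1) (highIdx i), PsiM_succ_lowIdx_highIdx, PsiM_symm m _ i, mulVec,
    dotProduct]

lemma bVec_succ_padZeros_lowIdx (a : Fin (2 ^ m - 1) → ℝ) (i : Fin (2 ^ m - 1)) :
    bVec (m + 1) (padZeros a) (lowIdx i) = 2 * bVec m a i := by
  simp only [bVec, sum_fin_two_pow_succ_sub_one, PsiM_succ_lowIdx_lowIdx, PsiM_succ_lowIdx_midIdx,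
    PsiM_succ_lowIdx_highIdx, mulVec_padZeros_lowIdx, mulVec_padZeros_highIdx, zero_mul, add_zero]
  ring

lemma bbar_succ_padZeros (a : Fin (2 ^ m - 1) → ℝ) : bbar (m + 1) (padZeros a) = 2 * bbar m a := by
  have hsum : ∑ j, padZeros a j = ∑ j, a j :=
    sum_padZeros_eq a (fun _ x => x) fun _ => rfl
  rw [bbar, hsum, sum_padZeros_eq a (fun j x => (x / ∑ k, a k) * bVec (m + 1) (padZeros a) j)
    fun _ => by rw [zero_div, zero_mul]]
  simp only [bbar, bVec_succ_padZeros_lowIdx, mul_sum]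
  exact sum_congr rfl fun _ _ => by ring

end Blocks

/-- doubling lemma for `b` and `b̄` under zero-padding.
Let `K = 2^m`, `a* ∈ ℝ^{K−1}`, and let `a' ∈ ℝ^{2K−1}` be obtained by appending `K` zeros
to `a*`. Then `b'_i = 2 b*_i` for all `i = 1, …, K−1`, and `b̄' = 2 b̄*`, where the primed
quantities are computed with `Ψ_{2K−1}` and the starred ones with `Ψ_{K−1}`. -/
theorem bVec_doubling_under_padding (m : ℕ)
    (astar : Fin (2 ^ m - 1) → ℝ) (a' : Fin (2 ^ (m + 1) - 1) → ℝ)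
    (ha' : a' = fun j => if h : j.val < 2 ^ m - 1 then astar ⟨j.val, h⟩ else 0) :
    (∀ i : Fin (2 ^ m - 1),
      bVec (m + 1) a'
        ⟨i.val, by
          have h1 := Nat.two_pow_pos m
          have h2 : 2 ^ (m + 1) = 2 * 2 ^ m := by rw [pow_succ]; ring
          have h3 := i.isLt
          omega⟩ = 2 * bVec m astar i) ∧
    bbar (m + 1) a' = 2 * bbar m astar := by
  subst ha'
  exact ⟨bVec_succ_padZeros_lowIdx astar, bbar_succ_padZeros astar⟩
end
end
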